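/- arXiv:2405.14335 — 5 statements merged into one kernel-verified Lean document; each statement's English description precedes it below -/
import Mathlib

section
/- Let X be a real random variable with X ≤ 0 almost surely and with E[X] finite, let λ > 0 and L ≥ 1 an integer. Then E[exp(λ(−(1/λ)log(1 − λE[X]) − X) − ∑_{ℓ=2}^{2L} (1/ℓ)(λX)^ℓ)] ≤ 1. -/
/-!
For `y ≤ 0` and even `n`, `-log (1 - y) ≤ ∑_{ℓ=1}^n y^ℓ / ℓ`: the difference vanishes at `0` and
its derivative `∑_{i<n} y^i - 1/(1 - y) = -y^n/(1 - y)` is nonpositive. Exponentiating,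
`exp (-y - ∑_{ℓ=2}^n y^ℓ / ℓ) ≤ 1 - y`. Applied to `y = λX` and integrated, the right-hand side
has mean `1 - λE[X]`, which the prefactor `exp (-log (1 - λE[X]))` cancels exactly.
-/

open MeasureTheory Finset

lemma geom_sum_le_inv_one_sub {n : ℕ} (hn : Even n) {z : ℝ} (hz : z < 1) :
    ∑ i ∈ range n, z ^ i ≤ (1 - z)⁻¹ := by
  rw [inv_eq_one_div, le_div_iff₀ (by linarith)]
  nlinarith [geom_sum_mul z n, hn.pow_nonneg z]

lemma hasDerivAt_sum_Icc_add_log_one_sub (n : ℕ) {z : ℝ} (hz : z ≠ 1) :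
    HasDerivAt (fun y : ℝ => ∑ ℓ ∈ Icc 1 n, (1 / ℓ : ℝ) * y ^ ℓ + Real.log (1 - y))
      (∑ i ∈ range n, z ^ i - (1 - z)⁻¹) z := by
  have hsum : HasDerivAt (fun y : ℝ => ∑ ℓ ∈ Icc 1 n, (1 / ℓ : ℝ) * y ^ ℓ)
      (∑ ℓ ∈ Icc 1 n, z ^ (ℓ - 1)) z := by
    refine HasDerivAt.fun_sum fun ℓ hℓ => ?_
    have hℓ0 : (ℓ : ℝ) ≠ 0 := Nat.cast_ne_zero.mpr (by grind)
    refine ((hasDerivAt_pow ℓ z).const_mul (1 / ℓ : ℝ)).congr_deriv ?_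
    rw [← mul_assoc, one_div_mul_cancel hℓ0, one_mul]
  have hlog : HasDerivAt (fun y : ℝ => Real.log (1 - y)) (-(1 - z)⁻¹) z := by
    refine (((hasDerivAt_id z).const_sub 1).log (sub_ne_zero.mpr hz.symm)).congr_deriv ?_
    simp [neg_div]
  refine (hsum.add hlog).congr_deriv ?_
  rw [← Ico_add_one_right_eq_Icc, sum_Ico_eq_sum_range]
  simp [sub_eq_add_neg]

lemma neg_log_one_sub_le_sum_Icc {n : ℕ} (hn : Even n) {y : ℝ} (hy : y ≤ 0) :
    -Real.log (1 - y) ≤ ∑ ℓ ∈ Icc 1 n, (1 / ℓ : ℝ) * y ^ ℓ := by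
  set f : ℝ → ℝ := fun y => ∑ ℓ ∈ Icc 1 n, (1 / ℓ : ℝ) * y ^ ℓ + Real.log (1 - y)
  have hderiv : ∀ z ≤ 0, HasDerivAt f (∑ i ∈ range n, z ^ i - (1 - z)⁻¹) z := fun z hz =>
    hasDerivAt_sum_Icc_add_log_one_sub n (by linarith)
  have hanti : AntitoneOn f (Set.Iic 0) := by
    refine antitoneOn_of_deriv_nonpos (convex_Iic 0)
      (fun z hz => (hderiv z hz).continuousAt.continuousWithinAt)
      (fun z hz => ?_) (fun z hz => ?_) <;> rw [interior_Iic] at hz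
    · exact (hderiv z hz.le).differentiableAt.differentiableWithinAt
    · rw [(hderiv z hz.le).deriv, sub_nonpos]
      exact geom_sum_le_inv_one_sub hn (by linarith [Set.mem_Iio.mp hz])
  have h0 : f 0 = 0 := by
    simp +contextual [f, sum_eq_zero, zero_pow, Nat.one_le_iff_ne_zero]
  have := hanti hy (Set.mem_Iic.mpr le_rfl) hy
  simp only [h0, f] at this
  linarith

lemma exp_neg_sub_sum_Icc_two_le_one_sub {n : ℕ} (hn : Even n) (hn0 : n ≠ 0) {y : ℝ}
    (hy : y ≤ 0) : Real.exp (-y - ∑ ℓ ∈ Icc 2 n, (1 / ℓ : ℝ) * y ^ ℓ) ≤ 1 - y := by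
  have hsplit : ∑ ℓ ∈ Icc 1 n, (1 / ℓ : ℝ) * y ^ ℓ = y + ∑ ℓ ∈ Icc 2 n, (1 / ℓ : ℝ) * y ^ ℓ := by
    rw [← add_sum_Ioc_eq_sum_Icc (Nat.one_le_iff_ne_zero.mpr hn0), ← Icc_add_one_left_eq_Ioc]
    simp
  rw [← Real.le_log_iff_exp_le (by linarith)]
  linarith [neg_log_one_sub_le_sum_Icc hn hy]

theorem integral_exp_neg_log_one_sub_integral_sub_sum_le_one {Ω : Type*} [MeasurableSpace Ω]
    {μ : Measure Ω} [IsProbabilityMeasure μ] {Y : Ω → ℝ} (hY : Integrable Y μ)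
    (hY0 : ∀ᵐ ω ∂μ, Y ω ≤ 0) {n : ℕ} (hn : Even n) (hn0 : n ≠ 0) :
    ∫ ω, Real.exp (-Real.log (1 - ∫ x, Y x ∂μ) - Y ω
      - ∑ ℓ ∈ Icc 2 n, (1 / ℓ : ℝ) * Y ω ^ ℓ) ∂μ ≤ 1 := by
  set c := 1 - ∫ x, Y x ∂μ
  have hc : 0 < c := by linarith [integral_nonpos_of_ae hY0]
  calc ∫ ω, Real.exp (-Real.log c - Y ω - ∑ ℓ ∈ Icc 2 n, (1 / ℓ : ℝ) * Y ω ^ ℓ) ∂μ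
      ≤ ∫ ω, c⁻¹ * (1 - Y ω) ∂μ := by
        refine integral_mono_of_nonneg (.of_forall fun ω => (Real.exp_pos _).le)
          (((integrable_const 1).sub hY).const_mul _) ?_
        filter_upwards [hY0] with ω hω
        rw [sub_sub, sub_eq_add_neg, Real.exp_add, Real.exp_neg, Real.exp_log hc, neg_add']
        gcongr
        exact exp_neg_sub_sum_Icc_two_le_one_sub hn hn0 hω
    _ = c⁻¹ * c := by rw [integral_const_mul, integral_sub (integrable_const 1) hY]; simp [c]
    _ = 1 := inv_mul_cancel₀ hc.ne'

theorem stmt3 {Ω : Type*} [MeasurableSpace Ω] (μ : Measure Ω) [IsProbabilityMeasure μ]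
    (X : Ω → ℝ) (hX : Integrable X μ) (hX0 : ∀ᵐ ω ∂μ, X ω ≤ 0)
    (lam : ℝ) (hlam : 0 < lam) (L : ℕ) (hL : 1 ≤ L) :
    ∫ ω, Real.exp (lam * (-(1 / lam) * Real.log (1 - lam * ∫ x, X x ∂μ) - X ω)
      - ∑ ℓ ∈ Finset.Icc 2 (2 * L), (1 / ℓ : ℝ) * (lam * X ω) ^ ℓ) ∂μ ≤ 1 := by
  have hY0 : ∀ᵐ ω ∂μ, lam * X ω ≤ 0 :=
    hX0.mono fun ω hω => mul_nonpos_of_nonneg_of_nonpos hlam.le hω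
  have hbound := integral_exp_neg_log_one_sub_integral_sub_sum_le_one (hX.const_mul lam) hY0
    (even_two_mul L) (by omega)
  rw [integral_const_mul] at hbound
  convert hbound using 5 with ω
  field_simp
end

section
/- Let X be a real random variable with X ≤ 0 almost surely and E[X] finite, and let λ > 0. Then E[(1 − λX)/(1 − λE[X])] = 1; consequently, for i.i.d. nonpositive X₁,…,Xₙ and any δ ∈ (0,1], with probability at least 1 − δ, −(1/λ) log(1 − λE[X₁]) ≤ −(1/(nλ)) ∑_{i=1}^n log(1 − λXᵢ) + log(1/δ)/(λn). -/
/-!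
For `X ≤ 0` and `λ > 0` the denominator `c = 1 - λ E[X]` is at least `1`, so
`W = log (1 - λ X) - log c` is well defined and `E[exp W] = E[(1 - λ X) / c] = 1`.
For independent copies the moment generating function of `∑ Wᵢ` at `1` is the product of the
individual ones, hence `1`, and Markov's inequality for `exp (∑ Wᵢ)` (the Chernoff bound at
`t = 1`) gives `P(∑ Wᵢ ≥ log (1/δ)) ≤ δ`. Dividing `∑ Wᵢ ≤ log (1/δ)` by `n λ` is the claimed bound.
-/

open MeasureTheory ProbabilityTheory

section

variable {Ω : Type*} [MeasurableSpace Ω] {μ : Measure Ω}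

lemma integral_sub_mul_div_sub_mul_integral [IsProbabilityMeasure μ] {X : Ω → ℝ}
    (hX : Integrable X μ) {a b : ℝ} (h : a - b * ∫ x, X x ∂μ ≠ 0) :
    ∫ ω, (a - b * X ω) / (a - b * ∫ x, X x ∂μ) ∂μ = 1 := by
  rw [integral_div, integral_sub (integrable_const a) (hX.const_mul b), integral_const,
    integral_const_mul, probReal_univ, one_smul, div_self h]

lemma one_le_one_sub_mul_integral {X : Ω → ℝ} {lam : ℝ} (hlam : 0 ≤ lam)
    (hX0 : ∀ᵐ ω ∂μ, X ω ≤ 0) : 1 ≤ 1 - lam * ∫ x, X x ∂μ := by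
  have := integral_nonpos_of_ae hX0
  nlinarith

lemma mgf_log_one_sub_mul_sub_log_eq_one [IsProbabilityMeasure μ] {X : Ω → ℝ} {lam : ℝ}
    (hlam : 0 ≤ lam) (hX : Integrable X μ) (hX0 : ∀ᵐ ω ∂μ, X ω ≤ 0) :
    mgf (fun ω => Real.log (1 - lam * X ω) - Real.log (1 - lam * ∫ x, X x ∂μ)) μ 1 = 1 := by
  have hc := one_le_one_sub_mul_integral hlam hX0
  have hexp : (fun ω => Real.exp (1 * (Real.log (1 - lam * X ω) -
      Real.log (1 - lam * ∫ x, X x ∂μ)))) =ᵐ[μ]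
      fun ω => (1 - lam * X ω) / (1 - lam * ∫ x, X x ∂μ) := by
    filter_upwards [hX0] with ω hω
    have hpos : 0 < 1 - lam * X ω := by nlinarith
    rw [one_mul, Real.exp_sub, Real.exp_log hpos, Real.exp_log (by linarith)]
  rw [mgf, integral_congr_ae hexp]
  exact integral_sub_mul_div_sub_mul_integral hX (by linarith)

lemma ofReal_one_sub_le_measure_of_measureReal_compl_le [IsProbabilityMeasure μ] {s : Set Ω}
    {δ : ℝ} (h : μ.real sᶜ ≤ δ) : ENNReal.ofReal (1 - δ) ≤ μ s := by
  have hδ : 0 ≤ δ := measureReal_nonneg.trans h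
  have hcompl : μ sᶜ ≤ ENNReal.ofReal δ := by
    rwa [ENNReal.le_ofReal_iff_toReal_le (measure_ne_top _ _) hδ]
  calc ENNReal.ofReal (1 - δ) = 1 - ENNReal.ofReal δ := by
        rw [ENNReal.ofReal_sub _ hδ, ENNReal.ofReal_one]
    _ ≤ μ s := by
        rw [tsub_le_iff_right, ← measure_univ (μ := μ)]
        exact (measure_univ_le_add_compl s).trans (by gcongr)

theorem ofReal_one_sub_le_measure_sum_le_log_one_div {ι : Type*} [Fintype ι] {W : ι → Ω → ℝ}
    (hindep : iIndepFun W μ) (hmeas : ∀ i, AEMeasurable (W i) μ) (hW : ∀ i, mgf (W i) μ 1 = 1)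
    {δ : ℝ} (hδ : 0 < δ) :
    ENNReal.ofReal (1 - δ) ≤ μ {ω | ∑ i, W i ω ≤ Real.log (1 / δ)} := by
  have := hindep.isProbabilityMeasure
  have hmgf : mgf (∑ i, W i) μ 1 = 1 := by
    rw [hindep.mgf_sum₀ hmeas]
    simp [hW]
  -- the Bochner integral of a non-integrable function is `0`, so `mgf = 1` forces integrability
  have hint : Integrable (fun ω => Real.exp (1 * (∑ i, W i) ω)) μ :=
    .of_integral_ne_zero (by rw [← mgf, hmgf]; exact one_ne_zero)
  have hchernoff := measure_ge_le_exp_mul_mgf (Real.log (1 / δ)) zero_le_one hint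
  have hbound : Real.exp (-1 * Real.log (1 / δ)) * mgf (∑ i, W i) μ 1 = δ := by
    rw [hmgf, mul_one, neg_one_mul, one_div, Real.log_inv, neg_neg, Real.exp_log hδ]
  refine ofReal_one_sub_le_measure_of_measureReal_compl_le
    ((measureReal_mono fun ω hω => ?_).trans (hchernoff.trans hbound.le))
  simp only [Set.mem_compl_iff, Set.mem_ofPred_eq, not_le, Finset.sum_apply] at hω ⊢
  exact hω.le

end

theorem stmt4_general {Ω : Type*} [MeasurableSpace Ω] (μ : Measure Ω) [IsProbabilityMeasure μ]
    (lam : ℝ) (hlam : 0 < lam)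
    (X : Ω → ℝ) (hX : Integrable X μ) (hX0 : ∀ᵐ ω ∂μ, X ω ≤ 0)
    (n : ℕ) (hn : 0 < n) (Y : Fin n → Ω → ℝ) (Y0 : Ω → ℝ)
    (hYint : Integrable Y0 μ)
    (hY0 : ∀ᵐ ω ∂μ, Y0 ω ≤ 0)
    (hindep : iIndepFun Y μ)
    (hident : ∀ i, IdentDistrib (Y i) Y0 μ μ)
    (δ : ℝ) (hδ : δ ∈ Set.Ioc (0:ℝ) 1) :
    (∫ ω, (1 - lam * X ω) / (1 - lam * ∫ x, X x ∂μ) ∂μ = 1) ∧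
    ENNReal.ofReal (1 - δ) ≤
      μ {ω | -(1 / lam) * Real.log (1 - lam * ∫ x, Y0 x ∂μ) ≤
        -(1 / (n * lam)) * ∑ i, Real.log (1 - lam * Y i ω) +
          Real.log (1 / δ) / (lam * n)} := by
  refine ⟨integral_sub_mul_div_sub_mul_integral hX
    (zero_lt_one.trans_le (one_le_one_sub_mul_integral hlam.le hX0)).ne', ?_⟩
  set c := 1 - lam * ∫ x, Y0 x ∂μ
  let g : ℝ → ℝ := fun y => Real.log (1 - lam * y) - Real.log c
  have hg : Measurable g := by fun_prop
  have hmgf : ∀ i, mgf (g ∘ Y i) μ 1 = 1 := fun i =>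
    (mgf_congr_of_identDistrib _ _ ((hident i).comp hg) 1).trans
      (mgf_log_one_sub_mul_sub_log_eq_one hlam.le hYint hY0)
  refine (ofReal_one_sub_le_measure_sum_le_log_one_div (hindep.comp (fun _ => g) fun _ => hg)
    (fun i => hg.comp_aemeasurable (hident i).aemeasurable_fst) hmgf hδ.1).trans
    (measure_mono fun ω hω => ?_)
  simp only [Set.mem_ofPred_eq, Function.comp_apply, g, Finset.sum_sub_distrib, Finset.sum_const,
    Finset.card_univ, Fintype.card_fin, nsmul_eq_mul] at hω ⊢
  have hn' : (n : ℝ) ≠ 0 := Nat.cast_ne_zero.mpr hn.ne'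
  calc -(1 / lam) * Real.log c
      = -(1 / (n * lam)) * ∑ i, Real.log (1 - lam * Y i ω) +
          (∑ i, Real.log (1 - lam * Y i ω) - n * Real.log c) / (lam * n) := by
        field_simp
        ring
    _ ≤ _ := by gcongr

theorem stmt4 {Ω : Type*} [MeasurableSpace Ω] (μ : Measure Ω) [IsProbabilityMeasure μ]
    (lam : ℝ) (hlam : 0 < lam)
    (X : Ω → ℝ) (hX : Integrable X μ) (hX0 : ∀ᵐ ω ∂μ, X ω ≤ 0)
    (n : ℕ) (hn : 0 < n) (Y : Fin n → Ω → ℝ) (Y0 : Ω → ℝ)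
    (hmeas : ∀ i, Measurable (Y i))
    (hYint : Integrable Y0 μ)
    (hY0 : ∀ᵐ ω ∂μ, Y0 ω ≤ 0)
    (hindep : iIndepFun Y μ)
    (hident : ∀ i, IdentDistrib (Y i) Y0 μ μ)
    (δ : ℝ) (hδ : δ ∈ Set.Ioc (0:ℝ) 1) :
    (∫ ω, (1 - lam * X ω) / (1 - lam * ∫ x, X x ∂μ) ∂μ = 1) ∧
    ENNReal.ofReal (1 - δ) ≤
      μ {ω | -(1 / lam) * Real.log (1 - lam * ∫ x, Y0 x ∂μ) ≤
        -(1 / (n * lam)) * ∑ i, Real.log (1 - lam * Y i ω) +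
          Real.log (1 / δ) / (lam * n)} :=
  stmt4_general μ lam hlam X hX hX0 n hn Y Y0 hYint hY0 hindep hident δ hδ
end

section
/- Let Z ≤ 0 almost surely with E[Z²] < ∞ and λ > 0. Then E[((1/λ)log(1 − λZ))²] ≤ E[Z²/(1 − λZ)] ≤ (1/λ)E[|Z|]. Consequently, if Z₁,…,Zₙ are i.i.d. copies, the variance of (1/n)∑ᵢ −(1/λ)log(1 − λZᵢ) is at most E[Z²/(1 − λZ)]/n ≤ E[|Z|]/(λn). -/
/-! The two moment bounds hold pointwise. With `u = √(1 + x)`, the bound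
`log (1 + x) ≤ x / √(1 + x)` is `log u ≤ sinh (log u) = (u - u⁻¹) / 2`; and `λ|z| ≤ 1 - λz` for
`z ≤ 0` gives `z² / (1 - λz) ≤ |z| / λ`. The variance of the mean of `n` i.i.d. copies of `f(Z)` is
`Var[f(Z)] / n ≤ 𝔼[f(Z)²] / n`. -/

open MeasureTheory ProbabilityTheory

namespace Real

lemma log_one_add_sq_le_sq_div {x : ℝ} (hx : 0 ≤ x) : log (1 + x) ^ 2 ≤ x ^ 2 / (1 + x) := by
  set u := √(1 + x)
  have hu : 1 ≤ u := one_le_sqrt.2 (by linarith)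
  have hu2 : u ^ 2 = 1 + x := sq_sqrt (by linarith)
  have hlog : log (1 + x) = 2 * log u := by rw [← hu2, log_pow]; norm_num
  have hsinh : log u ≤ (u - u⁻¹) / 2 := by
    rw [← sinh_log (by positivity)]
    exact self_le_sinh_iff.2 (log_nonneg hu)
  calc log (1 + x) ^ 2 = (2 * log u) ^ 2 := by rw [hlog]
    _ ≤ (u - u⁻¹) ^ 2 := pow_le_pow_left₀ (by have := log_nonneg hu; positivity) (by linarith) 2
    _ = x ^ 2 / (1 + x) := by
      rw [← hu2]; field_simp; rw [show x = u ^ 2 - 1 by linarith]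

end Real

lemma sq_one_div_mul_log_one_sub_mul_le {lam z : ℝ} (hlam : 0 < lam) (hz : z ≤ 0) :
    ((1 / lam) * Real.log (1 - lam * z)) ^ 2 ≤ z ^ 2 / (1 - lam * z) := by
  have key := Real.log_one_add_sq_le_sq_div (x := -(lam * z)) (by nlinarith)
  rw [← sub_eq_add_neg] at key
  calc ((1 / lam) * Real.log (1 - lam * z)) ^ 2 = Real.log (1 - lam * z) ^ 2 / lam ^ 2 := by ring
    _ ≤ (-(lam * z)) ^ 2 / (1 - lam * z) / lam ^ 2 := by gcongr
    _ = z ^ 2 / (1 - lam * z) := by field_simp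

lemma sq_div_one_sub_mul_le_one_div_mul_abs {lam z : ℝ} (hlam : 0 < lam) (hz : z ≤ 0) :
    z ^ 2 / (1 - lam * z) ≤ (1 / lam) * |z| := by
  have hpos : 0 < 1 - lam * z := by nlinarith
  rw [abs_of_nonpos hz, div_le_iff₀ hpos]
  have : (1 / lam) * (-z) * (1 - lam * z) = -z / lam + z ^ 2 := by field_simp; ring
  rw [this]
  have : 0 ≤ -z / lam := div_nonneg (by linarith) hlam.le
  linarith

section NonposSquareIntegrable

variable {Ω : Type*} [MeasurableSpace Ω] {μ : Measure Ω} {Z : Ω → ℝ}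

lemma aestronglyMeasurable_of_sq_of_nonpos (hZ2 : AEStronglyMeasurable (fun ω => Z ω ^ 2) μ)
    (hZ0 : ∀ᵐ ω ∂μ, Z ω ≤ 0) : AEStronglyMeasurable Z μ := by
  refine (continuous_neg.comp Real.continuous_sqrt).comp_aestronglyMeasurable hZ2 |>.congr ?_
  filter_upwards [hZ0] with ω hω
  simp [Real.sqrt_sq_eq_abs, abs_of_nonpos hω]

variable {lam : ℝ}

lemma integrable_sq_div_one_sub_mul (hlam : 0 ≤ lam) (hZ0 : ∀ᵐ ω ∂μ, Z ω ≤ 0)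
    (hZ2 : Integrable (fun ω => Z ω ^ 2) μ) :
    Integrable (fun ω => Z ω ^ 2 / (1 - lam * Z ω)) μ := by
  have hZ := aestronglyMeasurable_of_sq_of_nonpos hZ2.aestronglyMeasurable hZ0
  have hmeas : Measurable fun z : ℝ => z ^ 2 / (1 - lam * z) := by fun_prop
  refine hZ2.mono' (hmeas.comp_aemeasurable hZ.aemeasurable).aestronglyMeasurable ?_
  filter_upwards [hZ0] with ω hω
  rw [Real.norm_of_nonneg (div_nonneg (sq_nonneg _) (by nlinarith))]
  exact div_le_self (sq_nonneg _) (by nlinarith)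

lemma integrable_sq_one_div_mul_log_one_sub_mul (hlam : 0 < lam) (hZ0 : ∀ᵐ ω ∂μ, Z ω ≤ 0)
    (hZ2 : Integrable (fun ω => Z ω ^ 2) μ) :
    Integrable (fun ω => ((1 / lam) * Real.log (1 - lam * Z ω)) ^ 2) μ := by
  have hZ := aestronglyMeasurable_of_sq_of_nonpos hZ2.aestronglyMeasurable hZ0
  have hmeas : Measurable fun z : ℝ => ((1 / lam) * Real.log (1 - lam * z)) ^ 2 := by fun_prop
  refine (integrable_sq_div_one_sub_mul hlam.le hZ0 hZ2).mono'
    (hmeas.comp_aemeasurable hZ.aemeasurable).aestronglyMeasurable ?_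
  filter_upwards [hZ0] with ω hω
  rw [Real.norm_of_nonneg (sq_nonneg _)]
  exact sq_one_div_mul_log_one_sub_mul_le hlam hω

end NonposSquareIntegrable

section SampleMean

variable {Ω : Type*} [MeasurableSpace Ω] {μ : Measure Ω} {n : ℕ} {X : Fin n → Ω → ℝ} {Y : Ω → ℝ}

lemma variance_mean_of_iIndepFun_of_identDistrib (hY : MemLp Y 2 μ) (hindep : iIndepFun X μ)
    (hident : ∀ i, IdentDistrib (X i) Y μ μ) :
    variance (fun ω => (1 / n : ℝ) * ∑ i, X i ω) μ = variance Y μ / n := by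
  have hsum : variance (∑ i, X i) μ = ∑ i, variance (X i) μ :=
    IndepFun.variance_sum (fun i _ => (hident i).symm.memLp_snd hY)
      (fun i _ j _ hij => hindep.indepFun hij)
  have hmean : (fun ω => (1 / n : ℝ) * ∑ i, X i ω) = (1 / n : ℝ) • ∑ i, X i := by
    ext ω; simp [Finset.sum_apply]
  simp only [hmean, variance_smul, hsum, fun i => (hident i).variance_eq, Finset.sum_const,
    Finset.card_univ, Fintype.card_fin, nsmul_eq_mul]
  rcases eq_or_ne (n : ℝ) 0 with hn | hn
  · simp [hn]
  · field_simp

lemma variance_mean_comp_le [IsProbabilityMeasure μ] {f : ℝ → ℝ} (hf : Measurable f)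
    (hfY : MemLp (f ∘ Y) 2 μ) (hindep : iIndepFun X μ) (hident : ∀ i, IdentDistrib (X i) Y μ μ) :
    variance (fun ω => (1 / n : ℝ) * ∑ i, f (X i ω)) μ ≤ (∫ ω, f (Y ω) ^ 2 ∂μ) / n := by
  have hmean := variance_mean_of_iIndepFun_of_identDistrib (X := fun i => f ∘ X i) hfY
    (hindep.comp (fun _ => f) (fun _ => hf)) (fun i => (hident i).comp hf)
  simp only [Function.comp_apply] at hmean
  rw [hmean]
  exact div_le_div_of_nonneg_right (variance_le_expectation_sq hfY.aestronglyMeasurable)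
    n.cast_nonneg

end SampleMean

theorem stmt10_general {Ω : Type*} [MeasurableSpace Ω] (μ : Measure Ω) [IsProbabilityMeasure μ]
    (lam : ℝ) (hlam : 0 < lam)
    (Z : Ω → ℝ) (hZ0 : ∀ᵐ ω ∂μ, Z ω ≤ 0)
    (hZ2 : Integrable (fun ω => Z ω ^ 2) μ)
    (n : ℕ) (Zs : Fin n → Ω → ℝ)
    (hindep : iIndepFun Zs μ)
    (hident : ∀ i, IdentDistrib (Zs i) Z μ μ) :
    (∫ ω, ((1 / lam) * Real.log (1 - lam * Z ω)) ^ 2 ∂μ ≤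
        ∫ ω, Z ω ^ 2 / (1 - lam * Z ω) ∂μ) ∧
    (∫ ω, Z ω ^ 2 / (1 - lam * Z ω) ∂μ ≤ (1 / lam) * ∫ ω, |Z ω| ∂μ) ∧
    (variance (fun ω => (1 / n : ℝ) * ∑ i, -(1 / lam) * Real.log (1 - lam * Zs i ω)) μ ≤
        (∫ ω, Z ω ^ 2 / (1 - lam * Z ω) ∂μ) / n) ∧
    (∫ ω, Z ω ^ 2 / (1 - lam * Z ω) ∂μ) / n ≤ (∫ ω, |Z ω| ∂μ) / (lam * n) := by
  have hZ := aestronglyMeasurable_of_sq_of_nonpos hZ2.aestronglyMeasurable hZ0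
  have hG := integrable_sq_div_one_sub_mul hlam.le hZ0 hZ2
  have hH := integrable_sq_one_div_mul_log_one_sub_mul hlam hZ0 hZ2
  have habs : Integrable (fun ω => |Z ω|) μ :=
    (((memLp_two_iff_integrable_sq hZ).2 hZ2).integrable one_le_two).abs
  have hHG : ∫ ω, ((1 / lam) * Real.log (1 - lam * Z ω)) ^ 2 ∂μ ≤
      ∫ ω, Z ω ^ 2 / (1 - lam * Z ω) ∂μ :=
    integral_mono_ae hH hG (hZ0.mono fun ω => sq_one_div_mul_log_one_sub_mul_le hlam)
  have hGabs : ∫ ω, Z ω ^ 2 / (1 - lam * Z ω) ∂μ ≤ (1 / lam) * ∫ ω, |Z ω| ∂μ := by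
    rw [← integral_const_mul]
    exact integral_mono_ae hG (habs.const_mul _)
      (hZ0.mono fun ω => sq_div_one_sub_mul_le_one_div_mul_abs hlam)
  set f : ℝ → ℝ := fun z => -(1 / lam) * Real.log (1 - lam * z)
  have hf : Measurable f := by fun_prop
  have hfZ : MemLp (f ∘ Z) 2 μ := by
    refine (memLp_two_iff_integrable_sq
      (hf.comp_aemeasurable hZ.aemeasurable).aestronglyMeasurable).2 ?_
    simpa only [f, Function.comp_apply, neg_mul, neg_sq] using hH
  refine ⟨hHG, hGabs, ?_, ?_⟩
  · calc _ ≤ (∫ ω, f (Z ω) ^ 2 ∂μ) / n := variance_mean_comp_le hf hfZ hindep hident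
      _ ≤ _ := by
        simp only [f, neg_mul, neg_sq]
        exact div_le_div_of_nonneg_right hHG n.cast_nonneg
  · calc _ ≤ ((1 / lam) * ∫ ω, |Z ω| ∂μ) / n := div_le_div_of_nonneg_right hGabs n.cast_nonneg
      _ = _ := by ring

theorem stmt10 {Ω : Type*} [MeasurableSpace Ω] (μ : Measure Ω) [IsProbabilityMeasure μ]
    (lam : ℝ) (hlam : 0 < lam)
    (Z : Ω → ℝ) (hZ0 : ∀ᵐ ω ∂μ, Z ω ≤ 0)
    (hZ2 : Integrable (fun ω => Z ω ^ 2) μ)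
    (n : ℕ) (hn : 0 < n) (Zs : Fin n → Ω → ℝ)
    (hmeas : ∀ i, Measurable (Zs i))
    (hindep : iIndepFun Zs μ)
    (hident : ∀ i, IdentDistrib (Zs i) Z μ μ) :
    (∫ ω, ((1 / lam) * Real.log (1 - lam * Z ω)) ^ 2 ∂μ ≤
        ∫ ω, Z ω ^ 2 / (1 - lam * Z ω) ∂μ) ∧
    (∫ ω, Z ω ^ 2 / (1 - lam * Z ω) ∂μ ≤ (1 / lam) * ∫ ω, |Z ω| ∂μ) ∧
    (variance (fun ω => (1 / n : ℝ) * ∑ i, -(1 / lam) * Real.log (1 - lam * Zs i ω)) μ ≤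
        (∫ ω, Z ω ^ 2 / (1 - lam * Z ω) ∂μ) / n) ∧
    (∫ ω, Z ω ^ 2 / (1 - lam * Z ω) ∂μ) / n ≤ (∫ ω, |Z ω| ∂μ) / (lam * n) :=
  stmt10_general μ lam hlam Z hZ0 hZ2 n Zs hindep hident
end

section
/- Let p, p₀ ∈ (0,1] with p₀ > 0, c ∈ [−1,0], and λ > 0. Then −(1/λ)log(1 − λ(p/p₀)c) ≤ p·c/(p₀ − λ p c/2) ≤ p·c/(p₀ + λ/2) (note both sides are ≤ 0). Hence the Logarithmic Smoothing term is bounded above by the Implicit Exploration term. -/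
lemma aux_log_bound (x : ℝ) (hx : 0 ≤ x) : 2*x/(2+x) ≤ Real.log (1+x) := by
  set g : ℝ → ℝ := fun t => Real.log (1+t) - 2*t/(2+t) with hg
  have hderiv : ∀ y : ℝ, 0 < y → HasDerivAt g (1/(1+y) - 4/(2+y)^2) y := by
    intro y hy
    have h1 : HasDerivAt (fun t : ℝ => 1+t) 1 y := by
      simpa using (hasDerivAt_id y).const_add 1
    have h2 : HasDerivAt (fun t : ℝ => Real.log (1+t)) (1/(1+y)) y := by
      have := (h1.log (by positivity))
      simpa [one_div] using this
    have h3 : HasDerivAt (fun t : ℝ => 2*t) 2 y := by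
      simpa using (hasDerivAt_id y).const_mul 2
    have h4 : HasDerivAt (fun t : ℝ => 2+t) 1 y := by
      simpa using (hasDerivAt_id y).const_add 2
    have h5 : HasDerivAt (fun t : ℝ => 2*t/(2+t)) ((2*(2+y) - 2*y*1)/(2+y)^2) y :=
      h3.div h4 (by positivity)
    have h6 : (2*(2+y) - 2*y*1)/(2+y)^2 = 4/(2+y)^2 := by ring_nf
    rw [h6] at h5
    exact h2.sub h5
  have hcont : ContinuousOn g (Set.Ici 0) := by
    apply ContinuousOn.sub
    · apply ContinuousOn.log (by fun_prop)
      intro t ht; simp only [Set.mem_Ici] at ht; positivity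
    · apply ContinuousOn.div (by fun_prop) (by fun_prop)
      intro t ht; simp only [Set.mem_Ici] at ht; positivity
  have hmono : MonotoneOn g (Set.Ici 0) := by
    apply monotoneOn_of_deriv_nonneg (convex_Ici 0) hcont
    · intro y hy
      rw [interior_Ici] at hy
      exact ((hderiv y hy).differentiableAt).differentiableWithinAt
    · intro y hy
      rw [interior_Ici] at hy
      have hy' : 0 < y := hy
      rw [(hderiv y hy').deriv]
      rw [sub_nonneg, div_le_div_iff₀ (by positivity) (by positivity)]
      nlinarith [sq_nonneg y]
  have h0 : g 0 ≤ g x := hmono (Set.self_mem_Ici) hx hx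
  have hg0 : g 0 = 0 := by simp [hg]
  rw [hg0] at h0
  simpa [hg, sub_nonneg] using h0

theorem stmt12 (p p₀ c lam : ℝ) (hp : p ∈ Set.Ioc (0:ℝ) 1) (hp₀ : p₀ ∈ Set.Ioc (0:ℝ) 1)
    (hc : c ∈ Set.Icc (-1:ℝ) 0) (hlam : 0 < lam) :
    -(1 / lam) * Real.log (1 - lam * (p / p₀) * c) ≤ p * c / (p₀ - lam * p * c / 2) ∧
    p * c / (p₀ - lam * p * c / 2) ≤ p * c / (p₀ + lam / 2) := by
  obtain ⟨hp1, hp2⟩ := hp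
  obtain ⟨hp01, hp02⟩ := hp₀
  obtain ⟨hc1, hc2⟩ := hc
  set x : ℝ := -(lam * (p / p₀) * c) with hx
  have hxpos : 0 ≤ x := by
    have : lam * (p / p₀) * c ≤ 0 := by
      apply mul_nonpos_of_nonneg_of_nonpos _ hc2
      positivity
    rw [hx]; linarith
  have hlpc : lam * p * c ≤ 0 :=
    mul_nonpos_of_nonneg_of_nonpos (by positivity) hc2
  have hD1 : 0 < p₀ - lam * p * c / 2 := by linarith
  have hD2 : 0 < p₀ + lam / 2 := by linarith
  have hlog := aux_log_bound x hxpos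
  constructor
  · have heq : 1 - lam * (p / p₀) * c = 1 + x := by rw [hx]; ring
    rw [heq]
    have h1 : -(1/lam) * Real.log (1+x) ≤ -(1/lam) * (2*x/(2+x)) := by
      apply mul_le_mul_of_nonpos_left hlog
      have : 0 < 1/lam := by positivity
      linarith
    refine h1.trans_eq ?_
    have h2x : (2:ℝ) + x ≠ 0 := by positivity
    rw [hx] at h2x ⊢
    rw [← mul_div_assoc]
    rw [div_eq_div_iff h2x hD1.ne']
    field_simp
    ring
  · rw [div_le_div_iff₀ hD1 hD2]
    have hpc : p * c ≤ 0 := mul_nonpos_of_nonneg_of_nonpos hp1.le hc2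
    have h1 : 0 ≤ 1 + p * c := by
      nlinarith [mul_nonneg (sub_nonneg.mpr hp2) (neg_nonneg.mpr hc2)]
    nlinarith [mul_nonneg (mul_nonneg hlam.le h1) (neg_nonneg.mpr hpc)]
end

section
/- Let π, π₀ be probability mass functions on a finite set with π₀ everywhere positive on the support of π, and let c be a random cost in [−1,0] depending on (x,a) with (x,a) drawn from the joint of contexts and actions under π₀. Define w = π(a|x)/π₀(a|x), S_λ(π) = E[w²c²/(1 − λwc)] and C_μ(π) = E[π(a|x)|c|/(π₀(a|x)² + μ π₀(a|x))]. Then for every λ > 0, S_λ(π) ≤ C_{λ/2}(π). -/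
open MeasureTheory

/-- `P ω = π(a|x)`, `Q ω = π₀(a|x)`, `C ω = c`, under the logging distribution. -/
theorem stmt13 {Ω : Type*} [MeasurableSpace Ω] (μ : Measure Ω) [IsProbabilityMeasure μ]
    (P Q C : Ω → ℝ)
    (hP : ∀ᵐ ω ∂μ, P ω ∈ Set.Icc (0:ℝ) 1)
    (hQ : ∀ᵐ ω ∂μ, Q ω ∈ Set.Ioc (0:ℝ) 1)
    (hC : ∀ᵐ ω ∂μ, C ω ∈ Set.Icc (-1:ℝ) 0)
    (lam : ℝ) (hlam : 0 < lam)
    (hS : Integrable (fun ω => (P ω / Q ω) ^ 2 * C ω ^ 2 / (1 - lam * (P ω / Q ω) * C ω)) μ)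
    (hCov : Integrable (fun ω => P ω * |C ω| / (Q ω ^ 2 + (lam / 2) * Q ω)) μ) :
    ∫ ω, (P ω / Q ω) ^ 2 * C ω ^ 2 / (1 - lam * (P ω / Q ω) * C ω) ∂μ ≤
      ∫ ω, P ω * |C ω| / (Q ω ^ 2 + (lam / 2) * Q ω) ∂μ := by
  refine integral_mono_ae hS hCov ?_
  filter_upwards [hP, hQ, hC] with ω hp hq hc
  obtain ⟨hp0, hp1⟩ := hp
  obtain ⟨hq0, hq1⟩ := hq
  obtain ⟨hc0, hc1⟩ := hc
  set p := P ω; set q := Q ω; set c := C ω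
  have habs : |c| = -c := abs_of_nonpos hc1
  have hw : 0 ≤ p / q := div_nonneg hp0 hq0.le
  have hd1 : (0:ℝ) < 1 - lam * (p / q) * c := by
    have : lam * (p / q) * c ≤ 0 := mul_nonpos_of_nonneg_of_nonpos (by positivity) hc1
    linarith
  have hd2 : (0:ℝ) < q ^ 2 + lam / 2 * q := by positivity
  rw [habs, div_le_div_iff₀ hd1 hd2]
  have hq' : q ≠ 0 := ne_of_gt hq0
  have key : p ^ 2 * c ^ 2 * (q ^ 2 + lam / 2 * q) ≤
      (p * -c * (1 * q ^ 2 - lam * p * c * q)) := by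
    have hpc0 : 0 ≤ p * -c := mul_nonneg hp0 (by linarith)
    have hpc1 : p * -c ≤ 1 := mul_le_one₀ hp1 (by linarith) (by linarith)
    have h1 : (p * -c) ^ 2 ≤ p * -c := by nlinarith
    nlinarith [mul_le_mul_of_nonneg_right h1 (sq_nonneg q),
      mul_nonneg (mul_nonneg hlam.le (sq_nonneg (p * c))) hq0.le]
  have expand : (p / q) ^ 2 * c ^ 2 * (q ^ 2 + lam / 2 * q) =
      p ^ 2 * c ^ 2 * (q ^ 2 + lam / 2 * q) / q ^ 2 := by ring
  have expand2 : p * -c * (1 - lam * (p / q) * c) =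
      p * -c * (1 * q ^ 2 - lam * p * c * q) / q ^ 2 := by field_simp
  rw [expand, expand2]
  exact div_le_div_of_nonneg_right key (by positivity) |>.trans_eq rfl
end
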